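/- Let k : ℝ⁴ → ℝ be any smooth function and let {f,g} = k·(x₁(∂₂f·∂₃g − ∂₃f·∂₂g) + x₂(∂₁f·∂₃g − ∂₃f·∂₁g) − x₃(∂₁f·∂₂g − ∂₂f·∂₁g)) on ℝ⁴ with coordinates (θ,x₁,x₂,x₃). Then the functions Q¹(θ,x₁,x₂,x₃) = θ and Q²(θ,x₁,x₂,x₃) = −x₁² + x₂² + x₃² are Casimirs: {Q¹, g} = 0 and {Q², g} = 0 for every smooth g : ℝ⁴ → ℝ. -/

import Mathlib

/-- Partial derivative of `f : ℝ⁴ → ℝ` in the `i`-th coordinate direction;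
index `0` is θ and indices `1,2,3` are x₁,x₂,x₃. -/
noncomputable def pd (i : Fin 4) (f : (Fin 4 → ℝ) → ℝ) (x : Fin 4 → ℝ) : ℝ :=
  fderiv ℝ f x (Pi.single i 1)

/-- The broken-Lefschetz-fibration fold-circle bracket with conformal factor `k`. -/
noncomputable def foldBracket (k : (Fin 4 → ℝ) → ℝ)
    (f g : (Fin 4 → ℝ) → ℝ) : (Fin 4 → ℝ) → ℝ :=
  fun x =>
    k x * (x 1 * (pd 2 f x * pd 3 g x - pd 3 f x * pd 2 g x)
      + x 2 * (pd 1 f x * pd 3 g x - pd 3 f x * pd 1 g x)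
      - x 3 * (pd 1 f x * pd 2 g x - pd 2 f x * pd 1 g x))

/-! The bracket `{f, g}` only sees the transverse gradient `(∂₁f, ∂₂f, ∂₃f)`, and it vanishes
identically in `g` as soon as that gradient is a multiple of `(-x₁, x₂, x₃)`, i.e. of `½ ∇Q²`.
The transverse gradient of `Q¹ = θ` is zero, and that of `Q²` is `2 (-x₁, x₂, x₃)`. -/

theorem foldBracket_eq_zero_of_pd_eq_smul {k f : (Fin 4 → ℝ) → ℝ} (g : (Fin 4 → ℝ) → ℝ)
    {x : Fin 4 → ℝ} (c : ℝ) (h₁ : pd 1 f x = -(c * x 1)) (h₂ : pd 2 f x = c * x 2)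
    (h₃ : pd 3 f x = c * x 3) : foldBracket k f g x = 0 := by
  simp only [foldBracket, h₁, h₂, h₃]
  ring

theorem pd_apply (i j : Fin 4) (x : Fin 4 → ℝ) :
    pd i (fun y => y j) x = (Pi.single i 1 : Fin 4 → ℝ) j := by
  rw [pd, (hasFDerivAt_apply j x).fderiv]
  rfl

theorem pd_neg_sq_add_sq_add_sq (i : Fin 4) (x : Fin 4 → ℝ) :
    pd i (fun y => -(y 1) ^ 2 + (y 2) ^ 2 + (y 3) ^ 2) x =
      2 * (-(x 1 * (Pi.single i 1 : Fin 4 → ℝ) 1) + x 2 * (Pi.single i 1 : Fin 4 → ℝ) 2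
        + x 3 * (Pi.single i 1 : Fin 4 → ℝ) 3) := by
  have hsq (j : Fin 4) := (hasFDerivAt_apply (𝕜 := ℝ) j x).pow 2
  rw [pd, (((hsq 1).fun_neg.fun_add (hsq 2)).fun_add (hsq 3)).fderiv]
  simp only [Nat.add_one_sub_one, pow_one, nsmul_eq_mul, Nat.cast_ofNat,
    add_apply, neg_apply, smul_apply, ContinuousLinearMap.proj_apply, smul_eq_mul]
  ring

theorem foldBracket_casimirs_general (k : (Fin 4 → ℝ) → ℝ)
    (g : (Fin 4 → ℝ) → ℝ) (x : Fin 4 → ℝ) :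
    foldBracket k (fun y => y 0) g x = 0
    ∧ foldBracket k (fun y => -(y 1) ^ 2 + (y 2) ^ 2 + (y 3) ^ 2) g x = 0 := by
  refine ⟨foldBracket_eq_zero_of_pd_eq_smul g 0 ?_ ?_ ?_,
    foldBracket_eq_zero_of_pd_eq_smul g 2 ?_ ?_ ?_⟩ <;>
    simp [pd_apply, pd_neg_sq_add_sq_add_sq]

/-- `Q¹ = θ` and `Q² = −x₁² + x₂² + x₃²` are Casimir functions of the
fold-circle bracket. -/
theorem foldBracket_casimirs (k : (Fin 4 → ℝ) → ℝ) (hk : ContDiff ℝ (⊤ : ℕ∞) k)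
    (g : (Fin 4 → ℝ) → ℝ) (hg : ContDiff ℝ (⊤ : ℕ∞) g) (x : Fin 4 → ℝ) :
    foldBracket k (fun y => y 0) g x = 0
    ∧ foldBracket k (fun y => -(y 1) ^ 2 + (y 2) ^ 2 + (y 3) ^ 2) g x = 0 :=
  foldBracket_casimirs_general k g x
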